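/- arXiv:2005.09709 — 6 statements merged into one kernel-verified Lean document; each statement's English description precedes it below -/
import Mathlib

section
/- Let A and B be closed subsets of a metric space X and let x̄ ∈ A ∩ B. Then A and B are intrinsically transversal at x̄ if and only if A and B satisfy property (LT) at x̄. -/
open Metric Set
open scoped ENNReal

/-- `setInd S x` is `0` if `x ∈ S` and `+∞` otherwise (indicator in `ℝ≥0∞`). -/
noncomputable def setInd {X : Type*} (S : Set X) (x : X) : ℝ≥0∞ :=
  ⨅ (_ : x ∈ S), 0

/-- The coupling function `φ(x,y) = δ_A(x) + d(x,y) + δ_B(y)` of the sets `A` and `B`. -/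
noncomputable def coupling {X : Type*} [MetricSpace X] (A B : Set X) (p : X × X) : ℝ≥0∞ :=
  setInd A p.1 + ENNReal.ofReal (dist p.1 p.2) + setInd B p.2

/-- The nonlocal slope `|∇φ|◇(x,y)` of the coupling function of `A` and `B`,
with `X × X` carrying the sum metric. -/
noncomputable def couplingNLSlope {X : Type*} [MetricSpace X] (A B : Set X) (x y : X) : ℝ≥0∞ :=
  ⨆ (p : X × X) (_ : p ≠ (x, y)),
    (coupling A B (x, y) - coupling A B p) / ENNReal.ofReal (dist x p.1 + dist y p.2)

/-- The (local) slope `|∇φ|(x,y)` of the coupling function of `A` and `B`,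
with `X × X` carrying the sum metric. -/
noncomputable def couplingSlope {X : Type*} [MetricSpace X] (A B : Set X) (x y : X) : ℝ≥0∞ :=
  Filter.limsup
    (fun p : X × X =>
      (coupling A B (x, y) - coupling A B p) / ENNReal.ofReal (dist x p.1 + dist y p.2))
    (nhdsWithin (x, y) {q | q ≠ (x, y)})

/-- Property (LT) of closed sets `A`, `B` at a point `x0 ∈ A ∩ B`. -/
def PropLT {X : Type*} [MetricSpace X] (A B : Set X) (x0 : X) : Prop :=
  ∃ ε > 0, ∃ θ > 0,
    ∀ xA ∈ Metric.closedBall x0 ε ∩ (A \ B), ∀ xB ∈ Metric.closedBall x0 ε ∩ (B \ A),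
      xA ≠ xB →
      ∃ t : ℕ → ℝ, ∃ xa : ℕ → X, ∃ xb : ℕ → X,
        (∀ m, 0 < t m) ∧ Filter.Tendsto t Filter.atTop (nhds 0) ∧
        (∀ m, xa m ∈ A) ∧ (∀ m, xb m ∈ B) ∧
        ∀ m, dist (xa m) xA ≤ t m ∧ dist (xb m) xB ≤ t m ∧
          dist (xa m) (xb m) ≤ dist xA xB - t m * θ

/-- Intrinsic transversality of closed sets `A`, `B` at a point `x0 ∈ A ∩ B`,
defined via the slope of the coupling function. -/
def IntrinsicTrans {X : Type*} [MetricSpace X] (A B : Set X) (x0 : X) : Prop :=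
  ∃ δ > 0, ∃ κ > 0,
    ∀ xA ∈ Metric.ball x0 δ ∩ (A \ B), ∀ xB ∈ Metric.ball x0 δ ∩ (B \ A),
      ENNReal.ofReal κ ≤ couplingSlope A B xA xB


lemma setInd_mem {X : Type*} {S : Set X} {x : X} (h : x ∈ S) : setInd S x = 0 := by
  simp [setInd, h]

lemma setInd_notMem {X : Type*} {S : Set X} {x : X} (h : x ∉ S) : setInd S x = ⊤ := by
  simp [setInd, h]

lemma coupling_mem {X : Type*} [MetricSpace X] {A B : Set X} {p : X × X}
    (hu : p.1 ∈ A) (hv : p.2 ∈ B) :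
    coupling A B p = ENNReal.ofReal (dist p.1 p.2) := by
  simp [coupling, setInd_mem hu, setInd_mem hv]

lemma coupling_finite {X : Type*} [MetricSpace X] {A B : Set X} {p : X × X}
    (h : coupling A B p ≠ ⊤) : p.1 ∈ A ∧ p.2 ∈ B := by
  by_cases hu : p.1 ∈ A
  · by_cases hv : p.2 ∈ B
    · exact ⟨hu, hv⟩
    · exact absurd (by simp [coupling, setInd_notMem hv]) h
  · exact absurd (by simp [coupling, setInd_notMem hu]) h

theorem stmt12 {X : Type*} [MetricSpace X]
    {A B : Set X} (hA : IsClosed A) (hB : IsClosed B) {xbar : X} (hx : xbar ∈ A ∩ B) :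
    IntrinsicTrans A B xbar ↔ PropLT A B xbar := by
  constructor
  · -- Intrinsic transversality implies property (LT)
    rintro ⟨δ, hδ, κ, hκ, H⟩
    refine ⟨δ/2, by positivity, κ/2, by positivity, ?_⟩
    rintro xA ⟨hxA1, hxA2⟩ xB ⟨hxB1, hxB2⟩ hne
    have hballA : xA ∈ Metric.ball xbar δ := by
      have := Metric.mem_closedBall.mp hxA1
      exact Metric.mem_ball.mpr (by linarith)
    have hballB : xB ∈ Metric.ball xbar δ := by
      have := Metric.mem_closedBall.mp hxB1
      exact Metric.mem_ball.mpr (by linarith)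
    have hslope := H xA ⟨hballA, hxA2⟩ xB ⟨hballB, hxB2⟩
    set l := nhdsWithin (xA, xB) {q : X × X | q ≠ (xA, xB)} with hl
    set f : X × X → ℝ≥0∞ := fun p =>
      (coupling A B (xA, xB) - coupling A B p) / ENNReal.ofReal (dist xA p.1 + dist xB p.2)
      with hf
    have hlim : ENNReal.ofReal κ ≤ Filter.limsup f l := hslope
    have hlt : ENNReal.ofReal (κ/2) < Filter.limsup f l :=
      lt_of_lt_of_le ((ENNReal.ofReal_lt_ofReal_iff hκ).mpr (by linarith)) hlim
    have hfreq : ∃ᶠ p in l, ENNReal.ofReal (κ/2) < f p :=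
      Filter.frequently_lt_of_lt_limsup (by isBoundedDefault) hlt
    have key : ∀ m : ℕ, ∃ p : X × X, p ≠ (xA, xB) ∧
        dist p (xA, xB) < 1/((m:ℝ)+1) ∧ ENNReal.ofReal (κ/2) < f p := by
      intro m
      have h1 : ∀ᶠ p in l, dist p (xA, xB) < 1/((m:ℝ)+1) :=
        Filter.Eventually.filter_mono nhdsWithin_le_nhds
          (Metric.eventually_nhds_iff.mpr ⟨1/((m:ℝ)+1), by positivity, fun y hy => hy⟩)
      have h2 : ∀ᶠ p in l, p ≠ (xA, xB) := self_mem_nhdsWithin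
      obtain ⟨p, hp3, hp1, hp2⟩ := (hfreq.and_eventually (h2.and h1)).exists
      exact ⟨p, hp1, hp2, hp3⟩
    choose p hp1 hp2 hp3 using key
    set t : ℕ → ℝ := fun m => dist (p m) (xA, xB) with htdef
    have hDc : coupling A B (xA, xB) = ENNReal.ofReal (dist xA xB) :=
      coupling_mem hxA2.1 hxB2.1
    have hmemm : ∀ m, (p m).1 ∈ A ∧ (p m).2 ∈ B := by
      intro m
      apply coupling_finite
      intro htop
      have hz : f (p m) = 0 := by
        simp [hf, htop, hDc, tsub_eq_zero_of_le le_top, ENNReal.zero_div]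
      have hcontra := hp3 m
      rw [hz] at hcontra
      exact absurd hcontra (by simp)
    have hball : ∀ m, dist ((p m).1) xA ≤ t m ∧ dist ((p m).2) xB ≤ t m := by
      intro m
      rw [htdef]
      simp only [Prod.dist_eq]
      exact ⟨le_max_left _ _, le_max_right _ _⟩
    have hkey : ∀ m, dist ((p m).1) ((p m).2) ≤ dist xA xB - t m * (κ/2) := by
      intro m
      have hmem := hmemm m
      have hcp : coupling A B (p m) = ENNReal.ofReal (dist ((p m).1) ((p m).2)) :=
        coupling_mem hmem.1 hmem.2
      set s : ℝ := dist xA ((p m).1) + dist xB ((p m).2) with hsdef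
      have hts : t m ≤ s := by
        have hh : dist (p m) (xA, xB) ≤ dist xA ((p m).1) + dist xB ((p m).2) := by
          rw [Prod.dist_eq]
          refine max_le ?_ ?_
          · rw [dist_comm]; exact le_add_of_nonneg_right dist_nonneg
          · rw [dist_comm ((p m).2) xB]; exact le_add_of_nonneg_left dist_nonneg
        exact hh
      have ht0 : 0 < t m := dist_pos.mpr (hp1 m)
      have hs0 : 0 < s := lt_of_lt_of_le ht0 hts
      have hfval : f (p m) = ENNReal.ofReal ((dist xA xB - dist ((p m).1) ((p m).2)) / s) := by
        rw [hf]
        simp only []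
        rw [hDc, hcp, ← ENNReal.ofReal_sub _ dist_nonneg, ENNReal.ofReal_div_of_pos hs0]
      have hlt2 : κ/2 < (dist xA xB - dist ((p m).1) ((p m).2)) / s := by
        have := hp3 m
        rw [hfval] at this
        exact (ENNReal.ofReal_lt_ofReal_iff_of_nonneg (by positivity)).mp this
      have hlt3 : (κ/2) * s < dist xA xB - dist ((p m).1) ((p m).2) :=
        (lt_div_iff₀ hs0).mp hlt2
      have hmul : (κ/2) * t m ≤ (κ/2) * s :=
        mul_le_mul_of_nonneg_left hts (by positivity)
      nlinarith
    refine ⟨t, fun m => (p m).1, fun m => (p m).2, ?_, ?_, fun m => (hmemm m).1,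
      fun m => (hmemm m).2, fun m => ⟨(hball m).1, (hball m).2, hkey m⟩⟩
    · exact fun m => dist_pos.mpr (hp1 m)
    · exact squeeze_zero (fun m => dist_nonneg) (fun m => le_of_lt (hp2 m))
        tendsto_one_div_add_atTop_nhds_zero_nat
  · -- Property (LT) implies intrinsic transversality
    rintro ⟨ε, hε, θ, hθ, H⟩
    refine ⟨ε, hε, θ/2, by positivity, ?_⟩
    rintro xA ⟨hxA1, hxA2⟩ xB ⟨hxB1, hxB2⟩
    have hne : xA ≠ xB := fun h => hxB2.2 (h ▸ hxA2.1)
    obtain ⟨t, xa, xb, ht, ht0, hxa, hxb, hd⟩ :=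
      H xA ⟨Metric.ball_subset_closedBall hxA1, hxA2⟩
        xB ⟨Metric.ball_subset_closedBall hxB1, hxB2⟩ hne
    have hDc : coupling A B (xA, xB) = ENNReal.ofReal (dist xA xB) :=
      coupling_mem hxA2.1 hxB2.1
    set f : X × X → ℝ≥0∞ := fun p =>
      (coupling A B (xA, xB) - coupling A B p) / ENNReal.ofReal (dist xA p.1 + dist xB p.2)
      with hf
    have hpne : ∀ m, (xa m, xb m) ≠ (xA, xB) := by
      intro m h
      have h1 := (hd m).2.2
      have h2 : dist (xa m) (xb m) = dist xA xB := by
        rw [Prod.mk.injEq] at h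
        rw [h.1, h.2]
      have := mul_pos (ht m) hθ
      linarith
    have htend : Filter.Tendsto (fun m => (xa m, xb m)) Filter.atTop
        (nhdsWithin (xA, xB) {q : X × X | q ≠ (xA, xB)}) := by
      rw [tendsto_nhdsWithin_iff]
      constructor
      · refine Filter.Tendsto.prodMk_nhds ?_ ?_
        · exact tendsto_iff_dist_tendsto_zero.mpr
            (squeeze_zero (fun m => dist_nonneg) (fun m => (hd m).1) ht0)
        · exact tendsto_iff_dist_tendsto_zero.mpr
            (squeeze_zero (fun m => dist_nonneg) (fun m => (hd m).2.1) ht0)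
      · exact Filter.Eventually.of_forall hpne
    have hval : ∀ m, ENNReal.ofReal (θ/2) ≤ f (xa m, xb m) := by
      intro m
      have hcp : coupling A B (xa m, xb m) = ENNReal.ofReal (dist (xa m) (xb m)) :=
        coupling_mem (hxa m) (hxb m)
      have hnum : ENNReal.ofReal (t m * θ) ≤
          coupling A B (xA, xB) - coupling A B (xa m, xb m) := by
        rw [hDc, hcp, ← ENNReal.ofReal_sub _ dist_nonneg]
        exact ENNReal.ofReal_le_ofReal (by linarith [(hd m).2.2])
      have hden : ENNReal.ofReal (dist xA (xa m) + dist xB (xb m)) ≤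
          ENNReal.ofReal (2 * t m) := by
        apply ENNReal.ofReal_le_ofReal
        have h1 := (hd m).1
        have h2 := (hd m).2.1
        rw [dist_comm xA (xa m), dist_comm xB (xb m)]
        linarith
      have heq : (θ/2 : ℝ) = (t m * θ) / (2 * t m) := by
        rw [eq_div_iff (mul_ne_zero two_ne_zero (ne_of_gt (ht m)))]
        ring
      calc ENNReal.ofReal (θ/2) = ENNReal.ofReal (t m * θ) / ENNReal.ofReal (2 * t m) := by
            rw [heq, ENNReal.ofReal_div_of_pos (by linarith [ht m])]
        _ ≤ f (xa m, xb m) := ENNReal.div_le_div hnum hden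
    have hfreq : ∃ᶠ q in nhdsWithin (xA, xB) {q : X × X | q ≠ (xA, xB)},
        ENNReal.ofReal (θ/2) ≤ f q :=
      htend.frequently (Filter.Frequently.of_forall hval)
    exact Filter.le_limsup_of_frequently_le hfreq (by isBoundedDefault)
end

section
/- Let X be a Banach space and let A and B be closed convex subsets of X with x̄ ∈ A ∩ B. Then A and B are tangentially transversal at x̄ if and only if A and B are subtransversal at x̄. -/
open Metric Set
open scoped ENNReal

/-- Tangential transversality of closed sets `A`, `B` at a point `x0 ∈ A ∩ B`. -/
def TangTrans {X : Type*} [MetricSpace X] (A B : Set X) (x0 : X) : Prop :=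
  ∃ M > 0, ∃ δ > 0, ∃ η > 0,
    ∀ xA ∈ Metric.closedBall x0 δ ∩ A, ∀ xB ∈ Metric.closedBall x0 δ ∩ B, xA ≠ xB →
      ∃ t : ℕ → ℝ, ∃ xa : ℕ → X, ∃ xb : ℕ → X,
        (∀ m, 0 < t m) ∧ Filter.Tendsto t Filter.atTop (nhds 0) ∧
        (∀ m, xa m ∈ A) ∧ (∀ m, xb m ∈ B) ∧
        ∀ m, dist (xa m) xA ≤ t m * M ∧ dist (xb m) xB ≤ t m * M ∧
          dist (xa m) (xb m) ≤ dist xA xB - t m * η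

/-- Subtransversality of closed sets `A`, `B` at a point `x0 ∈ A ∩ B`. -/
def Subtrans {X : Type*} [MetricSpace X] (A B : Set X) (x0 : X) : Prop :=
  ∃ K > 0, ∃ δ > 0, ∀ x ∈ Metric.ball x0 δ,
    EMetric.infEdist x (A ∩ B) ≤
      ENNReal.ofReal K * (EMetric.infEdist x A + EMetric.infEdist x B)


/-!
Both properties are equivalent to a condition on pairs: for `a ∈ A` and `b ∈ B` near `x̄` there is
a point of `A ∩ B` within `C * dist a b` of `a`. Subtransversality evaluated at `x = a` gives it,
and it gives subtransversality back through nearly closest points `a`, `b` to `x`. Tangential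
transversality gives it by Ekeland's principle for `(a, b) ↦ dist a b` on the complete space
`A × B` with slope `η / M`: the Ekeland point lies on the diagonal, since otherwise a tangential
step decreases the distance by `t η` while moving the pair by at most `t M`. Conversely, for convex
sets, moving `a` and `b` along the segments towards a common point shrinks their distance linearly.
-/

open Filter Topology

section Ekeland

variable {Y : Type*} [MetricSpace Y] (f : Y → ℝ) (ε : ℝ)

def ekelandSet (x : Y) : Set Y := {y | f y + ε * dist y x ≤ f x}

variable {f ε}

lemma self_mem_ekelandSet (x : Y) : x ∈ ekelandSet f ε x := by
  simp [ekelandSet]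

lemma ekelandSet_subset (hε : 0 ≤ ε) {x y : Y} (hy : y ∈ ekelandSet f ε x) :
    ekelandSet f ε y ⊆ ekelandSet f ε x := fun z hz => by
  have := mul_le_mul_of_nonneg_left (dist_triangle z y x) hε
  simp only [ekelandSet, mem_ofPred_eq] at hy hz ⊢
  linarith

lemma isClosed_ekelandSet (hf : LowerSemicontinuous f) (x : Y) : IsClosed (ekelandSet f ε x) :=
  (hf.add (continuous_const.mul (continuous_id.dist continuous_const)).lowerSemicontinuous
    ).isClosed_preimage (f x)

lemma bddBelow_image_ekelandSet (hf : BddBelow (range f)) (x : Y) :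
    BddBelow (f '' ekelandSet f ε x) :=
  hf.mono (image_subset_range f _)

lemma sInf_image_ekelandSet_le (hf : BddBelow (range f)) {x y : Y} (hy : y ∈ ekelandSet f ε x) :
    sInf (f '' ekelandSet f ε x) ≤ f y :=
  csInf_le (bddBelow_image_ekelandSet hf x) (mem_image_of_mem f hy)

lemma exists_mem_ekelandSet_two_mul_le (hf : BddBelow (range f)) (x : Y) :
    ∃ y ∈ ekelandSet f ε x, 2 * f y ≤ f x + sInf (f '' ekelandSet f ε x) := by
  rcases (sInf_image_ekelandSet_le hf (self_mem_ekelandSet x)).lt_or_eq with hlt | heq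
  · obtain ⟨_, ⟨y, hy, rfl⟩, hy_lt⟩ := exists_lt_of_csInf_lt
      ((Set.nonempty_of_mem (self_mem_ekelandSet x)).image f)
      (show sInf (f '' ekelandSet f ε x) < (f x + sInf (f '' ekelandSet f ε x)) / 2 by linarith)
    exact ⟨y, hy, by linarith⟩
  · exact ⟨x, self_mem_ekelandSet x, by linarith⟩

/-- Ekeland's variational principle. -/
theorem exists_le_forall_lt_add_mul_dist [CompleteSpace Y] (hf : LowerSemicontinuous f)
    (hbdd : BddBelow (range f)) (hε : 0 < ε) (x₀ : Y) :
    ∃ x, f x + ε * dist x x₀ ≤ f x₀ ∧ ∀ y ≠ x, f x < f y + ε * dist y x := by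
  set S := ekelandSet f ε
  choose next hnext_mem hnext_le using exists_mem_ekelandSet_two_mul_le (ε := ε) hbdd
  set u : ℕ → Y := fun n => next^[n] x₀
  have hu_succ (n : ℕ) : u (n + 1) = next (u n) := Function.iterate_succ_apply' _ _ _
  set gap : ℕ → ℝ := fun n => f (u n) - sInf (f '' S (u n))
  have hS_anti : Antitone (S ∘ u) := antitone_nat_of_succ_le fun n => by
    simpa only [Function.comp, hu_succ] using ekelandSet_subset hε.le (hnext_mem (u n))
  have hu_mem {n m : ℕ} (h : n ≤ m) : u m ∈ S (u n) := hS_anti h (self_mem_ekelandSet _)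
  -- each step at least halves the gap between `f` and its infimum over the current set
  have hgap_succ (n : ℕ) : gap (n + 1) ≤ gap n / 2 := by
    have hsInf : sInf (f '' S (u n)) ≤ sInf (f '' S (u (n + 1))) :=
      csInf_le_csInf (bddBelow_image_ekelandSet hbdd _)
        ((Set.nonempty_of_mem (self_mem_ekelandSet _)).image f) (image_mono (hS_anti n.le_succ))
    have := hnext_le (u n)
    simp only [gap, hu_succ] at hsInf ⊢
    linarith
  have hgap_nonneg (n : ℕ) : 0 ≤ gap n :=
    sub_nonneg.2 (sInf_image_ekelandSet_le hbdd (self_mem_ekelandSet (u n)))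
  have hgap_lim : Tendsto gap atTop (𝓝 0) := by
    have hgeom (n : ℕ) : gap n ≤ gap 0 * (1 / 2) ^ n := by
      induction n with
      | zero => simp
      | succ n ih => rw [pow_succ]; linarith [hgap_succ n]
    exact squeeze_zero hgap_nonneg hgeom
      (by simpa using (tendsto_pow_atTop_nhds_zero_of_lt_one (by norm_num : (0 : ℝ) ≤ 1 / 2)
        (by norm_num)).const_mul (gap 0))
  have hcauchy : CauchySeq u := by
    refine cauchySeq_of_le_tendsto_0' (fun n => gap n / ε) (fun n m hnm => ?_)
      (by simpa using hgap_lim.div_const ε)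
    have hum : f (u m) + ε * dist (u m) (u n) ≤ f (u n) := hu_mem hnm
    have := sInf_image_ekelandSet_le hbdd (hu_mem hnm)
    rw [dist_comm, le_div_iff₀ hε]
    linarith
  obtain ⟨x, hx⟩ := cauchySeq_tendsto_of_complete hcauchy
  have hx_mem (n : ℕ) : x ∈ S (u n) :=
    (isClosed_ekelandSet hf _).mem_of_tendsto hx (eventually_atTop.2 ⟨n, fun _ => hu_mem⟩)
  refine ⟨x, hx_mem 0, fun y hyx => ?_⟩
  by_contra! hy
  have hbound (n : ℕ) : ε * dist y x ≤ gap n := by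
    have hfy := sInf_image_ekelandSet_le hbdd (ekelandSet_subset hε.le (hx_mem n) hy)
    have hfx : f x + ε * dist x (u n) ≤ f (u n) := hx_mem n
    have := mul_nonneg hε.le (dist_nonneg (x := x) (y := u n))
    simp only [gap]
    linarith
  have : ε * dist y x ≤ 0 := ge_of_tendsto' hgap_lim hbound
  exact hyx (dist_le_zero.1 (nonpos_of_mul_nonpos_right this hε))

end Ekeland

section Transversality

variable {X : Type*} [MetricSpace X]

def PairRegular (A B : Set X) (x₀ : X) : Prop :=
  ∃ C > 0, ∃ r > 0, ∀ a ∈ A, ∀ b ∈ B, a ∈ ball x₀ r → b ∈ ball x₀ r →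
    ∃ c ∈ A ∩ B, dist a c ≤ C * dist a b

lemma infEDist_eq_ofReal_infDist {s : Set X} (hs : s.Nonempty) (x : X) :
    infEDist x s = ENNReal.ofReal (infDist x s) :=
  (ENNReal.ofReal_toReal (infEDist_ne_top hs)).symm

lemma infDist_le_mul_infDist_add_infDist {s A B : Set X} {x : X} {K : ℝ} (hK : 0 < K)
    (hA : A.Nonempty) (hB : B.Nonempty)
    (h : ∀ a ∈ A, ∀ b ∈ B, infDist x s ≤ K * (dist x a + dist x b)) :
    infDist x s ≤ K * (infDist x A + infDist x B) := by
  have hb : ∀ b ∈ B, infDist x s / K - dist x b ≤ infDist x A := fun b hb =>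
    (le_infDist hA).2 fun a ha => by
      rw [div_sub' hK.ne', div_le_iff₀ hK]; linarith [h a ha b hb]
  have : infDist x s / K - infDist x A ≤ infDist x B :=
    (le_infDist hB).2 fun b hb' => by linarith [hb b hb']
  rw [div_sub' hK.ne', div_le_iff₀ hK] at this
  linarith

theorem Subtrans.pairRegular {A B : Set X} {x₀ : X} (h : Subtrans A B x₀) :
    PairRegular A B x₀ := by
  obtain ⟨K, hK, δ, hδ, hsub⟩ := h
  refine ⟨K + 1, by positivity, δ, hδ, fun a ha b hb ha₀ _ => ?_⟩
  rcases eq_or_ne a b with rfl | hab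
  · exact ⟨a, ⟨ha, hb⟩, by simp⟩
  have hd : 0 < dist a b := dist_pos.2 hab
  have hlt : infEDist a (A ∩ B) < ENNReal.ofReal ((K + 1) * dist a b) := calc
    infEDist a (A ∩ B) ≤ ENNReal.ofReal K * (infEDist a A + infEDist a B) :=
      hsub a ha₀
    _ ≤ ENNReal.ofReal K * (0 + edist a b) := by
      gcongr
      · exact (infEDist_zero_of_mem ha).le
      · exact infEDist_le_edist_of_mem hb
    _ = ENNReal.ofReal (K * dist a b) := by
      rw [zero_add, edist_dist, ← ENNReal.ofReal_mul hK.le]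
    _ < ENNReal.ofReal ((K + 1) * dist a b) :=
      (ENNReal.ofReal_lt_ofReal_iff (by positivity)).2 (by nlinarith)
  obtain ⟨c, hc, hac⟩ := infEDist_lt_iff.1 hlt
  exact ⟨c, hc, (edist_lt_ofReal.1 hac).le⟩

theorem PairRegular.subtrans {A B : Set X} {x₀ : X} (hx₀ : x₀ ∈ A ∩ B)
    (h : PairRegular A B x₀) : Subtrans A B x₀ := by
  obtain ⟨C, hC, r, hr, hreg⟩ := h
  refine ⟨C + 1, by positivity, r / 2, by positivity, fun x hx => ?_⟩
  have hx' : dist x x₀ < r / 2 := hx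
  have key : ∀ a ∈ A, ∀ b ∈ B, infDist x (A ∩ B) ≤ (C + 1) * (dist x a + dist x b) := by
    intro a ha b hb
    have hsum := add_nonneg (dist_nonneg (x := x) (y := a)) (dist_nonneg (x := x) (y := b))
    by_cases hnear : a ∈ ball x₀ r ∧ b ∈ ball x₀ r
    · obtain ⟨c, hc, hac⟩ := hreg a ha b hb hnear.1 hnear.2
      calc infDist x (A ∩ B) ≤ dist x c := infDist_le_dist_of_mem hc
        _ ≤ dist x a + dist a c := dist_triangle x a c
        _ ≤ dist x a + C * (dist x a + dist x b) := by
          gcongr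
          exact hac.trans (mul_le_mul_of_nonneg_left (dist_triangle_left a b x) hC.le)
        _ ≤ (C + 1) * (dist x a + dist x b) := by nlinarith [dist_nonneg (x := x) (y := b)]
    · -- a far point of `A` or `B` is already farther from `x` than `x₀ ∈ A ∩ B` is
      have hfar : r / 2 ≤ dist x a + dist x b := by
        simp only [mem_ball, not_and_or, not_lt] at hnear
        rcases hnear with h | h
        · linarith [dist_triangle a x x₀, dist_comm a x, dist_nonneg (x := x) (y := b)]
        · linarith [dist_triangle b x x₀, dist_comm b x, dist_nonneg (x := x) (y := a)]
      calc infDist x (A ∩ B) ≤ dist x x₀ := infDist_le_dist_of_mem hx₀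
        _ ≤ dist x a + dist x b := by linarith
        _ ≤ (C + 1) * (dist x a + dist x b) := le_mul_of_one_le_left hsum (by linarith)
  have hreal := infDist_le_mul_infDist_add_infDist (by positivity) ⟨x₀, hx₀.1⟩ ⟨x₀, hx₀.2⟩ key
  show infEDist x (A ∩ B) ≤ ENNReal.ofReal (C + 1) * (infEDist x A + infEDist x B)
  rw [infEDist_eq_ofReal_infDist ⟨x₀, hx₀⟩, infEDist_eq_ofReal_infDist ⟨x₀, hx₀.1⟩,
    infEDist_eq_ofReal_infDist ⟨x₀, hx₀.2⟩, ← ENNReal.ofReal_add infDist_nonneg infDist_nonneg,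
    ← ENNReal.ofReal_mul (by positivity)]
  exact ENNReal.ofReal_le_ofReal hreal

theorem TangTrans.pairRegular [CompleteSpace X] {A B : Set X}
    (hA : IsClosed A) (hB : IsClosed B) {x₀ : X} (h : TangTrans A B x₀) :
    PairRegular A B x₀ := by
  obtain ⟨M, hM, δ, hδ, η, hη, htang⟩ := h
  have : CompleteSpace (A ×ˢ B) := (hA.prod hB).isComplete.completeSpace_coe
  set r := δ / (1 + 2 * (M / η))
  have hr : r + 2 * (M / η) * r = δ := by simp only [r]; field_simp
  refine ⟨M / η, by positivity, r, by positivity, fun a ha b hb ha₀ hb₀ => ?_⟩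
  obtain ⟨⟨⟨a', b'⟩, ha', hb'⟩, hclose, hmin⟩ :=
    exists_le_forall_lt_add_mul_dist (f := fun p : A ×ˢ B => dist p.1.1 p.1.2)
      (by fun_prop : Continuous _).lowerSemicontinuous ⟨0, by rintro _ ⟨p, rfl⟩; positivity⟩
      (by positivity : 0 < η / M) ⟨(a, b), ha, hb⟩
  simp only [Subtype.dist_eq, Prod.dist_eq] at hclose hmin
  have hmove : max (dist a' a) (dist b' b) ≤ M / η * dist a b := calc
    _ = M / η * (η / M * max (dist a' a) (dist b' b)) := by field_simp
    _ ≤ M / η * dist a b := by gcongr; linarith [dist_nonneg (x := a') (y := b')]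
  have hmove_le : M / η * dist a b ≤ 2 * (M / η) * r := by
    have := dist_triangle_right a b x₀
    rw [mul_comm 2, mul_assoc]
    gcongr
    linarith [mem_ball.1 ha₀, mem_ball.1 hb₀]
  have ha'₀ : a' ∈ closedBall x₀ δ := by
    rw [mem_closedBall]
    linarith [dist_triangle a' a x₀, mem_ball.1 ha₀, le_max_left (dist a' a) (dist b' b)]
  have hb'₀ : b' ∈ closedBall x₀ δ := by
    rw [mem_closedBall]
    linarith [dist_triangle b' b x₀, mem_ball.1 hb₀, le_max_right (dist a' a) (dist b' b)]
  -- off the diagonal, a tangential step would beat the Ekeland point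
  have hdiag : a' = b' := by
    by_contra hne
    obtain ⟨t, xa, xb, ht, -, hxa, hxb, hstep⟩ := htang a' ⟨ha'₀, ha'⟩ b' ⟨hb'₀, hb'⟩ hne
    obtain ⟨hda, hdb, hdab⟩ := hstep 0
    have hlt := hmin ⟨(xa 0, xb 0), hxa 0, hxb 0⟩ fun heq => by
      obtain ⟨rfl, rfl⟩ := Prod.ext_iff.1 (congrArg Subtype.val heq)
      linarith [mul_pos (ht 0) hη]
    have : η / M * max (dist (xa 0) a') (dist (xb 0) b') ≤ t 0 * η := calc
      _ ≤ η / M * (t 0 * M) := by gcongr; exact max_le hda hdb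
      _ = t 0 * η := by field_simp
    linarith
  exact ⟨a', ⟨ha', hdiag ▸ hb'⟩, by rw [dist_comm]; linarith [le_max_left (dist a' a) (dist b' b)]⟩

end Transversality

open AffineMap

lemma dist_lineMap_lineMap_right_eq {𝕜 E : Type*} [NormedField 𝕜] [SeminormedAddCommGroup E]
    [NormedSpace 𝕜 E] (x y z : E) (s : 𝕜) :
    dist (lineMap x z s) (lineMap y z s) = ‖1 - s‖ * dist x y := by
  rw [dist_eq_norm, dist_eq_norm, lineMap_apply_module, lineMap_apply_module, ← norm_smul]
  congr 1
  module

theorem PairRegular.tangTrans {X : Type*} [NormedAddCommGroup X] [NormedSpace ℝ X] {A B : Set X}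
    (hAc : Convex ℝ A) (hBc : Convex ℝ B) {x₀ : X} (h : PairRegular A B x₀) :
    TangTrans A B x₀ := by
  obtain ⟨C, hC, r, hr, hreg⟩ := h
  refine ⟨C + 1, by positivity, r / 2, by positivity, 1, one_pos, ?_⟩
  rintro xA ⟨hxA₀, hxA⟩ xB ⟨hxB₀, hxB⟩ hne
  have hball : closedBall x₀ (r / 2) ⊆ ball x₀ r := closedBall_subset_ball (by linarith)
  obtain ⟨c, hc, hAc'⟩ := hreg xA hxA xB hxB (hball hxA₀) (hball hxB₀)
  have hBc' : dist xB c ≤ (C + 1) * dist xA xB := by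
    linarith [dist_triangle_left xB c xA, dist_comm xA xB]
  set d := dist xA xB
  set s : ℕ → ℝ := fun m => 1 / (m + 1)
  have hs (m : ℕ) : s m ∈ Icc 0 1 :=
    ⟨by positivity, div_le_one_of_le₀ (by linarith [m.cast_nonneg (α := ℝ)]) (by positivity)⟩
  refine ⟨fun m => s m * d, fun m => lineMap xA c (s m), fun m => lineMap xB c (s m),
    fun m => mul_pos (by positivity) (dist_pos.2 hne), ?_, fun m => hAc.lineMap_mem hxA hc.1 (hs m),
    fun m => hBc.lineMap_mem hxB hc.2 (hs m), fun m => ⟨?_, ?_, ?_⟩⟩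
  · simpa [s] using tendsto_one_div_add_atTop_nhds_zero_nat.mul_const d
  · rw [dist_lineMap_left, Real.norm_of_nonneg (hs m).1, mul_assoc]
    gcongr
    linarith [dist_nonneg (x := xA) (y := xB)]
  · rw [dist_lineMap_left, Real.norm_of_nonneg (hs m).1, mul_assoc]
    gcongr
    linarith
  · rw [dist_lineMap_lineMap_right_eq, Real.norm_of_nonneg (sub_nonneg.2 (hs m).2)]
    linarith

theorem stmt13 {X : Type*} [NormedAddCommGroup X] [NormedSpace ℝ X] [CompleteSpace X]
    {A B : Set X} (hA : IsClosed A) (hB : IsClosed B)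
    (hAc : Convex ℝ A) (hBc : Convex ℝ B) {xbar : X} (hx : xbar ∈ A ∩ B) :
    TangTrans A B xbar ↔ Subtrans A B xbar :=
  ⟨fun h => (h.pairRegular hA hB).subtrans hx, fun h => h.pairRegular.tangTrans hAc hBc⟩
end

section
/- Let X be a normed space, let A and B be closed subsets of X, and let x̄ ∈ A ∩ B. If A and B satisfy property (P) at x̄, then A and B satisfy property (LT) at x̄. -/
open Metric Set
open scoped ENNReal

/-- `tripleDist A B Ω = inf_{x ∈ Ω, a ∈ A, b ∈ B} max{‖x - a‖, ‖x - b‖}`,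
with the convention that the infimum over the empty set is `+∞`. -/
noncomputable def tripleDist {X : Type*} [NormedAddCommGroup X] (A B Ω : Set X) : ℝ≥0∞ :=
  ⨅ x ∈ Ω, ⨅ a ∈ A, ⨅ b ∈ B, ENNReal.ofReal (max ‖x - a‖ ‖x - b‖)

/-- Property (P) of closed sets `A`, `B` at a point `x0 ∈ A ∩ B`. -/
def PropP {X : Type*} [NormedAddCommGroup X] (A B : Set X) (x0 : X) : Prop :=
  ∃ α : ℝ, 0 < α ∧ α < 1 ∧ ∃ ε > 0,
    ∀ a ∈ (A \ B) ∩ Metric.ball x0 ε, ∀ b ∈ (B \ A) ∩ Metric.ball x0 ε,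
      ∀ x ∈ Metric.ball x0 ε, ‖x - a‖ = ‖x - b‖ →
        ∀ δ > 0, ∃ ρ : ℝ, 0 < ρ ∧ ρ < δ ∧
          tripleDist (A ∩ Metric.ball a ((α + 1 / Real.sqrt ε) * ρ))
              (B ∩ Metric.ball b ((α + 1 / Real.sqrt ε) * ρ))
              (Metric.ball x ρ) +
            ENNReal.ofReal (α * ρ) ≤ ENNReal.ofReal ‖x - a‖

/-!
Given `xA ∈ A \ B` and `xB ∈ B \ A` at distance `d`, apply (P) at their midpoint, which is
equidistant (`d / 2`) from both. It yields `ρ < δ` and points `a ∈ A`, `b ∈ B` within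
`t := (α + 1 / √ε) ρ` of `xA`, `xB` that are both closer than `d / 2 - α ρ / 2` to a common point,
so `dist a b < d - α ρ = d - t θ` with `θ := α / (α + 1 / √ε)`. Letting `δ → 0` gives (LT), on the
ball of radius `ε / 2` so that midpoints stay in the ball where (P) holds.
-/

section TripleDist

variable {X : Type*} [NormedAddCommGroup X] {A B Ω : Set X}

lemma exists_max_norm_sub_lt_of_tripleDist_lt {r : ℝ} (h : tripleDist A B Ω < ENNReal.ofReal r) :
    ∃ x ∈ Ω, ∃ a ∈ A, ∃ b ∈ B, max ‖x - a‖ ‖x - b‖ < r := by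
  simp only [tripleDist, iInf_lt_iff] at h
  obtain ⟨x, hx, a, ha, b, hb, hlt⟩ := h
  exact ⟨x, hx, a, ha, b, hb,
    (ENNReal.ofReal_lt_ofReal_iff_of_nonneg ((norm_nonneg _).trans (le_max_left _ _))).1 hlt⟩

/-- The triangle inequality through the common centre `x` gives `dist a b ≤ 2 max ‖x - a‖ ‖x - b‖`;
the gap `s` leaves room to pass from the infimum to actual points. -/
lemma exists_dist_lt_of_tripleDist_add_le {r s : ℝ} (hs : 0 < s)
    (h : tripleDist A B Ω + ENNReal.ofReal s ≤ ENNReal.ofReal r) :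
    ∃ a ∈ A, ∃ b ∈ B, dist a b < 2 * r - s := by
  have hsr : s ≤ r := ENNReal.ofReal_le_ofReal_iff'.1 (le_add_self.trans h) |>.resolve_right
    (by linarith)
  have hlt : tripleDist A B Ω < ENNReal.ofReal (r - s / 2) :=
    calc tripleDist A B Ω ≤ ENNReal.ofReal r - ENNReal.ofReal s :=
          ENNReal.le_sub_of_add_le_right ENNReal.ofReal_ne_top h
      _ = ENNReal.ofReal (r - s) := (ENNReal.ofReal_sub _ hs.le).symm
      _ < ENNReal.ofReal (r - s / 2) := (ENNReal.ofReal_lt_ofReal_iff (by linarith)).2 (by linarith)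
  obtain ⟨x, -, a, ha, b, hb, hmax⟩ := exists_max_norm_sub_lt_of_tripleDist_lt hlt
  refine ⟨a, ha, b, hb, ?_⟩
  calc dist a b ≤ dist x a + dist x b := dist_triangle_left a b x
    _ = ‖x - a‖ + ‖x - b‖ := by rw [dist_eq_norm, dist_eq_norm]
    _ < 2 * r - s := by linarith [le_max_left ‖x - a‖ ‖x - b‖, le_max_right ‖x - a‖ ‖x - b‖]

end TripleDist

lemma exists_seq_of_forall_exists_lt {X : Type*} [MetricSpace X] {A B : Set X} {xA xB : X}
    {θ : ℝ} (h : ∀ δ > 0, ∃ t, 0 < t ∧ t < δ ∧ ∃ a ∈ A, ∃ b ∈ B,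
      dist a xA ≤ t ∧ dist b xB ≤ t ∧ dist a b ≤ dist xA xB - t * θ) :
    ∃ t : ℕ → ℝ, ∃ xa : ℕ → X, ∃ xb : ℕ → X,
      (∀ m, 0 < t m) ∧ Filter.Tendsto t Filter.atTop (nhds 0) ∧
      (∀ m, xa m ∈ A) ∧ (∀ m, xb m ∈ B) ∧
      ∀ m, dist (xa m) xA ≤ t m ∧ dist (xb m) xB ≤ t m ∧
        dist (xa m) (xb m) ≤ dist xA xB - t m * θ := by
  choose t ht_pos ht_lt xa hxa xb hxb hdist using fun m : ℕ => h (1 / (m + 1)) (by positivity)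
  refine ⟨t, xa, xb, ht_pos, ?_, hxa, hxb, hdist⟩
  exact squeeze_zero (fun m => (ht_pos m).le) (fun m => (ht_lt m).le)
    tendsto_one_div_add_atTop_nhds_zero_nat

theorem stmt14_general {X : Type*} [NormedAddCommGroup X] [NormedSpace ℝ X]
    {A B : Set X} {xbar : X}
    (hP : PropP A B xbar) : PropLT A B xbar := by
  obtain ⟨α, hα, -, ε, hε, hP⟩ := hP
  set C := α + 1 / Real.sqrt ε
  have hC : 0 < C := by positivity
  refine ⟨ε / 2, by positivity, α / C, by positivity, ?_⟩
  rintro xA ⟨hxA, hxA_mem⟩ xB ⟨hxB, hxB_mem⟩ -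
  have hball : closedBall xbar (ε / 2) ⊆ ball xbar ε := closedBall_subset_ball (by linarith)
  have hmid : midpoint ℝ xA xB ∈ ball xbar ε :=
    hball ((convex_closedBall xbar _).segment_subset hxA hxB (midpoint_mem_segment xA xB))
  have hequi : ‖midpoint ℝ xA xB - xA‖ = ‖midpoint ℝ xA xB - xB‖ := by
    rw [← dist_eq_norm, ← dist_eq_norm, dist_midpoint_left, dist_midpoint_right]
  refine exists_seq_of_forall_exists_lt fun δ hδ => ?_
  obtain ⟨ρ, hρ, hρδ, hρ_dist⟩ :=
    hP xA ⟨hxA_mem, hball hxA⟩ xB ⟨hxB_mem, hball hxB⟩ _ hmid hequi (δ / C) (by positivity)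
  obtain ⟨a, ⟨ha, haxA⟩, b, ⟨hb, hbxB⟩, hab⟩ :=
    exists_dist_lt_of_tripleDist_add_le (by positivity) hρ_dist
  refine ⟨C * ρ, by positivity, (lt_div_iff₀' hC).1 hρδ, a, ha, b, hb,
    (mem_ball.1 haxA).le, (mem_ball.1 hbxB).le, ?_⟩
  have hmid_dist : 2 * ‖midpoint ℝ xA xB - xA‖ = dist xA xB := by
    rw [← dist_eq_norm, dist_midpoint_left]; norm_num; ring
  have hθ : C * ρ * (α / C) = α * ρ := by field_simp
  linarith

theorem stmt14 {X : Type*} [NormedAddCommGroup X] [NormedSpace ℝ X]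
    {A B : Set X} (hA : IsClosed A) (hB : IsClosed B) {xbar : X} (hx : xbar ∈ A ∩ B)
    (hP : PropP A B xbar) : PropLT A B xbar :=
  stmt14_general hP
end

section
/- Let A and B be closed subsets of a normed space X and let x̄ ∈ A ∩ B. Then the set-valued map H_{A,B} is metrically regular at the graph point ((x̄, x̄), 0) if and only if there exist K > 0 and δ > 0 such that d(x, (A − a) ∩ (B − b)) ≤ K(d(x, A − a) + d(x, B − b)) for all x ∈ B_δ(x̄) and all a, b ∈ B_δ(0). -/
open Metric Set
open scoped ENNReal

/-- The set-valued map `H_{A,B} : X × X ⇒ X`, `H_{A,B}(x₁,x₂) = {x₁ - x₂}` if `x₁ ∈ A`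
and `x₂ ∈ B`, and `∅` otherwise. -/
def Hmap {X : Type*} [NormedAddCommGroup X] (A B : Set X) (p : X × X) : Set X :=
  {v | p.1 ∈ A ∧ p.2 ∈ B ∧ v = p.1 - p.2}

/-- The distance (valued in `ℝ≥0∞`, `+∞` on the empty set) from a point of `X × X` to a
subset of `X × X`, where `X × X` carries the sum metric. -/
noncomputable def sumInfEdist {X : Type*} [NormedAddCommGroup X]
    (p : X × X) (S : Set (X × X)) : ℝ≥0∞ :=
  ⨅ q ∈ S, ENNReal.ofReal (‖p.1 - q.1‖ + ‖p.2 - q.2‖)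

/-! If `H_{A,B}` is metrically regular, take near-projections `u ∈ A` of `x + a` and `v ∈ B` of
`x + b`; they lie near `x̄`, so regularity at `(u, v)` with `y = a - b` gives `q ∈ A × B` with
`q.1 - q.2 = a - b` close to `(u, v)`, and `q.1 - a` lies in `(A - a) ∩ (B - b)`. Conversely, for
`p ∈ A × B` the transversality estimate with `a = 0`, `b = -y` at `p.1` produces `w ∈ A ∩ (B + y)`,
and `(w, w - y) ∈ H⁻¹(y)` is within `2‖p.1 - w‖ + ‖y - (p.1 - p.2)‖` of `p`. -/

namespace Metric

variable {α : Type*} [PseudoEMetricSpace α] {k c t r : ℝ≥0∞} {y : α} {s : Set α}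

theorem le_mul_infEDist_add (hk₀ : k ≠ 0) (hk : k ≠ ∞)
    (h : ∀ u ∈ s, c ≤ k * edist y u + t) : c ≤ k * infEDist y s + t := by
  rw [infEDist, ENNReal.mul_iInf_of_ne hk₀ hk, ENNReal.iInf_add]
  refine le_iInf fun u => ?_
  rw [ENNReal.mul_iInf_of_ne hk₀ hk, ENNReal.iInf_add]
  exact le_iInf (h u)

theorem infEDist_inter_eball_of_lt (h : infEDist y s < r) :
    infEDist y (s ∩ eball y r) = infEDist y s := by
  refine le_antisymm (le_of_forall_gt fun c hc => ?_) (infEDist_anti inter_subset_left)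
  obtain ⟨u, hu, hyu⟩ := infEDist_lt_iff.mp (lt_min hc h)
  have hu' : u ∈ s ∩ eball y r := ⟨hu, mem_eball'.mpr (hyu.trans_le (min_le_right _ _))⟩
  exact (infEDist_le_edist_of_mem hu').trans_lt (hyu.trans_le (min_le_left _ _))

theorem le_mul_infEDist_add_of_lt (hk₀ : k ≠ 0) (hk : k ≠ ∞) (hr : infEDist y s < r)
    (h : ∀ u ∈ s, edist y u < r → c ≤ k * edist y u + t) : c ≤ k * infEDist y s + t := by
  rw [← infEDist_inter_eball_of_lt hr]
  exact le_mul_infEDist_add hk₀ hk fun u hu => h u hu.1 (mem_eball'.mp hu.2)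

theorem infEDist_image_sub_const {X : Type*} [NormedAddCommGroup X] (A : Set X) (x a : X) :
    infEDist x ((· - a) '' A) = infEDist (x + a) A := by
  simpa using infEDist_image (IsometryEquiv.subRight a).isometry (x := x + a) (t := A)

end Metric

section Hmap

variable {X : Type*} [NormedAddCommGroup X] {A B : Set X}

theorem Hmap_eq_singleton {u v : X} (hu : u ∈ A) (hv : v ∈ B) : Hmap A B (u, v) = {u - v} := by
  ext w
  simp [Hmap, hu, hv]

theorem Hmap_eq_empty {p : X × X} (hp : ¬(p.1 ∈ A ∧ p.2 ∈ B)) : Hmap A B p = ∅ :=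
  eq_empty_of_forall_notMem fun _ hw => hp ⟨hw.1, hw.2.1⟩

theorem sumInfEdist_eq_iInf (p : X × X) (S : Set (X × X)) :
    sumInfEdist p S = ⨅ q ∈ S, edist p.1 q.1 + edist p.2 q.2 := by
  simp only [sumInfEdist, edist_dist, dist_eq_norm,
    ENNReal.ofReal_add (norm_nonneg _) (norm_nonneg _)]

theorem infEDist_inter_image_sub_le {a b x u v : X} (hu : u ∈ A) (hv : v ∈ B) {c : ℝ≥0∞}
    (hreg : sumInfEdist (u, v) {q | a - b ∈ Hmap A B q} ≤
      c * infEDist (a - b) (Hmap A B (u, v))) :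
    infEDist x ((· - a) '' A ∩ (· - b) '' B) ≤ (c + 1) * (edist (x + a) u + edist (x + b) v) := by
  rw [Hmap_eq_singleton hu hv, infEDist_singleton] at hreg
  have hres : edist (a - b) (u - v) ≤ edist (x + a) u + edist (x + b) v := by
    simp only [edist_eq_enorm_sub]
    calc ‖a - b - (u - v)‖ₑ = ‖(x + a - u) - (x + b - v)‖ₑ := by congr 1; abel
      _ ≤ ‖x + a - u‖ₑ + ‖x + b - v‖ₑ := enorm_sub_le
  -- each `q ∈ H⁻¹(a - b)` yields the point `q.1 - a` of both translates
  have hpre : infEDist x ((· - a) '' A ∩ (· - b) '' B) ≤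
      edist (x + a) u + sumInfEdist (u, v) {q | a - b ∈ Hmap A B q} := by
    simp only [sumInfEdist_eq_iInf, ENNReal.add_iInf]
    refine le_iInf₂ fun q ⟨hq₁, hq₂, hq⟩ => ?_
    have hmem : q.1 - a ∈ (· - a) '' A ∩ (· - b) '' B :=
      ⟨⟨q.1, hq₁, rfl⟩,
        ⟨q.2, hq₂, by rw [sub_eq_sub_iff_sub_eq_sub, ← neg_sub q.1, ← hq, neg_sub]⟩⟩
    calc infEDist x _ ≤ edist x (q.1 - a) := infEDist_le_edist_of_mem hmem
      _ = edist (x + a) q.1 := by rw [← edist_sub_right (x + a) q.1 a, add_sub_cancel_right]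
      _ ≤ edist (x + a) u + edist u q.1 := edist_triangle _ _ _
      _ ≤ edist (x + a) u + (edist u q.1 + edist v q.2) := by gcongr; exact le_self_add
  calc infEDist x _ ≤ edist (x + a) u + c * (edist (x + a) u + edist (x + b) v) :=
        hpre.trans (by gcongr; exact hreg.trans (by gcongr))
    _ ≤ (c + 1) * (edist (x + a) u + edist (x + b) v) := by
        rw [add_mul, one_mul, add_comm]; gcongr; exact le_self_add

theorem sumInfEdist_preimage_Hmap_le (p : X × X) (y : X) :
    sumInfEdist p {q | y ∈ Hmap A B q} ≤
      2 * infEDist p.1 (A ∩ (· - -y) '' B) + edist y (p.1 - p.2) := by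
  refine le_mul_infEDist_add two_ne_zero ENNReal.ofNat_ne_top ?_
  rintro _ ⟨hzyA, z, hz, rfl⟩
  have hq : (z - -y, z) ∈ {q | y ∈ Hmap A B q} := ⟨hzyA, hz, by simp⟩
  calc sumInfEdist p _ ≤ edist p.1 (z - -y) + edist p.2 z := by
        rw [sumInfEdist_eq_iInf]; exact iInf₂_le _ hq
    _ ≤ edist p.1 (z - -y) + (edist p.2 (p.1 - y) + edist (p.1 - y) z) := by
        gcongr; exact edist_triangle _ _ _
    _ = 2 * edist p.1 (z - -y) + edist y (p.1 - p.2) := by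
        have h₁ : edist p.2 (p.1 - y) = edist y (p.1 - p.2) := by
          simp only [edist_eq_enorm_sub]; congr 1; abel
        have h₂ : edist (p.1 - y) z = edist p.1 (z - -y) := by
          rw [← edist_sub_right p.1 (z - -y) y, sub_neg_eq_add, add_sub_cancel_right]
        rw [h₁, h₂, two_mul]; ring

end Hmap

section Transversality

variable {X : Type*} [NormedAddCommGroup X]

def IsMetricallyRegularHmapWith (A B : Set X) (xbar : X) (K δ : ℝ) : Prop :=
  ∀ p : X × X, ‖p.1 - xbar‖ + ‖p.2 - xbar‖ < δ → ∀ y : X, ‖y - 0‖ < δ →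
    sumInfEdist p {q | y ∈ Hmap A B q} ≤ ENNReal.ofReal K * infEDist y (Hmap A B p)

/-- The metric characterisation of transversality of `{A, B}` at `x̄`, with constants `K`
and `δ`. -/
def IsTransversalWith (A B : Set X) (xbar : X) (K δ : ℝ) : Prop :=
  ∀ a ∈ ball (0 : X) δ, ∀ b ∈ ball (0 : X) δ, ∀ x ∈ ball xbar δ,
    infEDist x ((· - a) '' A ∩ (· - b) '' B) ≤
      ENNReal.ofReal K * (infEDist x ((· - a) '' A) + infEDist x ((· - b) '' B))

variable {A B : Set X} {xbar : X} {K δ : ℝ}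

theorem IsMetricallyRegularHmapWith.isTransversalWith (hx : xbar ∈ A ∩ B) (hK : 0 ≤ K)
    (h : IsMetricallyRegularHmapWith A B xbar K δ) :
    IsTransversalWith A B xbar (K + 1) (δ / 8) := by
  intro a ha b hb x hxbar
  rw [mem_ball_zero_iff] at ha hb
  rw [mem_ball, dist_eq_norm] at hxbar
  rw [infEDist_image_sub_const, infEDist_image_sub_const, ENNReal.ofReal_add hK zero_le_one,
    ENNReal.ofReal_one, mul_add]
  have hk₀ : ENNReal.ofReal K + 1 ≠ 0 := by simp
  have hk : ENNReal.ofReal K + 1 ≠ ∞ := by simp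
  -- only points of `A`, `B` within `δ / 4` of `x + a`, `x + b` matter, and those are near `x̄`
  have hnear {c : X} {s : Set X} (hs : xbar ∈ s) (hc : ‖c‖ < δ / 8) :
      infEDist (x + c) s < ENNReal.ofReal (δ / 4) := by
    refine (infEDist_le_edist_of_mem hs).trans_lt ?_
    rw [edist_dist, dist_eq_norm, ENNReal.ofReal_lt_ofReal_iff (by linarith [norm_nonneg c])]
    calc ‖x + c - xbar‖ = ‖(x - xbar) + c‖ := by congr 1; abel
      _ ≤ ‖x - xbar‖ + ‖c‖ := norm_add_le _ _
      _ < δ / 4 := by linarith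
  have hclose {c u : X} (hc : ‖c‖ < δ / 8) (hu : edist (x + c) u < ENNReal.ofReal (δ / 4)) :
      ‖u - xbar‖ < δ / 2 := by
    rw [edist_dist, ENNReal.ofReal_lt_ofReal_iff (by linarith [norm_nonneg c]), dist_eq_norm]
      at hu
    calc ‖u - xbar‖ = ‖(x - xbar) + c - (x + c - u)‖ := by congr 1; abel
      _ ≤ ‖x - xbar‖ + ‖c‖ + ‖x + c - u‖ :=
        (norm_sub_le _ _).trans (by gcongr; exact norm_add_le _ _)
      _ < δ / 2 := by linarith
  refine le_mul_infEDist_add_of_lt hk₀ hk (hnear hx.1 ha) fun u hu hxu => ?_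
  rw [add_comm]
  refine le_mul_infEDist_add_of_lt hk₀ hk (hnear hx.2 hb) fun v hv hxv => ?_
  rw [add_comm, ← mul_add]
  refine infEDist_inter_image_sub_le hu hv (h (u, v) ?_ (a - b) ?_)
  · linarith [hclose ha hxu, hclose hb hxv]
  · rw [sub_zero]
    linarith [norm_sub_le a b, norm_nonneg a]

theorem IsTransversalWith.isMetricallyRegularHmapWith (hK : 0 ≤ K)
    (h : IsTransversalWith A B xbar K δ) :
    IsMetricallyRegularHmapWith A B xbar (2 * K + 1) δ := by
  intro p hp y hy
  rw [sub_zero] at hy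
  by_cases hpAB : p.1 ∈ A ∧ p.2 ∈ B
  swap
  · rw [Hmap_eq_empty hpAB, infEDist_empty, ENNReal.mul_top (by simp; positivity)]
    exact le_top
  obtain ⟨hp₁, hp₂⟩ := hpAB
  rw [← Prod.mk.eta (p := p), Hmap_eq_singleton hp₁ hp₂, infEDist_singleton]
  have htrans := h 0 (mem_ball_self ((norm_nonneg y).trans_lt hy)) (-y)
    (by rwa [mem_ball_zero_iff, norm_neg]) p.1
    (by rw [mem_ball, dist_eq_norm]; linarith [norm_nonneg (p.2 - xbar)])
  rw [infEDist_image_sub_const, infEDist_image_sub_const, add_zero,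
    infEDist_zero_of_mem hp₁, zero_add] at htrans
  simp only [sub_zero, image_id'] at htrans
  have hB : infEDist (p.1 + -y) B ≤ edist y (p.1 - p.2) :=
    (infEDist_le_edist_of_mem hp₂).trans_eq <| by
      rw [edist_eq_enorm_sub, edist_eq_enorm_sub, ← enorm_neg]; congr 1; abel
  calc sumInfEdist p {q | y ∈ Hmap A B q}
      ≤ 2 * infEDist p.1 (A ∩ (· - -y) '' B) + edist y (p.1 - p.2) :=
        sumInfEdist_preimage_Hmap_le p y
    _ ≤ 2 * (ENNReal.ofReal K * edist y (p.1 - p.2)) + edist y (p.1 - p.2) := by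
        gcongr; exact htrans.trans (by gcongr)
    _ = ENNReal.ofReal (2 * K + 1) * edist y (p.1 - p.2) := by
        rw [ENNReal.ofReal_add (by positivity) zero_le_one, ENNReal.ofReal_mul zero_le_two,
          ENNReal.ofReal_ofNat, ENNReal.ofReal_one]
        ring

end Transversality

theorem stmt16_general {X : Type*} [NormedAddCommGroup X]
    {A B : Set X} {xbar : X} (hx : xbar ∈ A ∩ B) :
    -- metric regularity of `H_{A,B}` at `((x̄, x̄), 0)`, with the sum metric on `X × X`
    (∃ K > 0, ∃ δ > 0, ∀ p : X × X, ‖p.1 - xbar‖ + ‖p.2 - xbar‖ < δ →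
        ∀ y : X, ‖y - 0‖ < δ →
          sumInfEdist p {q | y ∈ Hmap A B q} ≤
            ENNReal.ofReal K * EMetric.infEdist y (Hmap A B p)) ↔
    (∃ K > 0, ∃ δ > 0, ∀ a ∈ Metric.ball (0 : X) δ, ∀ b ∈ Metric.ball (0 : X) δ,
        ∀ x ∈ Metric.ball xbar δ,
          EMetric.infEdist x (((· - a) '' A) ∩ ((· - b) '' B)) ≤
            ENNReal.ofReal K *
              (EMetric.infEdist x ((· - a) '' A) + EMetric.infEdist x ((· - b) '' B))) := by
  constructor
  · rintro ⟨K, hK, δ, hδ, h⟩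
    exact ⟨K + 1, by positivity, δ / 8, by positivity, IsMetricallyRegularHmapWith.isTransversalWith hx hK.le h⟩
  · rintro ⟨K, hK, δ, hδ, h⟩
    exact ⟨2 * K + 1, by positivity, δ, hδ, IsTransversalWith.isMetricallyRegularHmapWith hK.le h⟩

theorem stmt16 {X : Type*} [NormedAddCommGroup X] [NormedSpace ℝ X]
    {A B : Set X} (hA : IsClosed A) (hB : IsClosed B) {xbar : X} (hx : xbar ∈ A ∩ B) :
    -- metric regularity of `H_{A,B}` at `((x̄, x̄), 0)`, with the sum metric on `X × X`
    (∃ K > 0, ∃ δ > 0, ∀ p : X × X, ‖p.1 - xbar‖ + ‖p.2 - xbar‖ < δ →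
        ∀ y : X, ‖y - 0‖ < δ →
          sumInfEdist p {q | y ∈ Hmap A B q} ≤
            ENNReal.ofReal K * EMetric.infEdist y (Hmap A B p)) ↔
    (∃ K > 0, ∃ δ > 0, ∀ a ∈ Metric.ball (0 : X) δ, ∀ b ∈ Metric.ball (0 : X) δ,
        ∀ x ∈ Metric.ball xbar δ,
          EMetric.infEdist x (((· - a) '' A) ∩ ((· - b) '' B)) ≤
            ENNReal.ofReal K *
              (EMetric.infEdist x ((· - a) '' A) + EMetric.infEdist x ((· - b) '' B))) :=
  stmt16_general hx
end

section
/- Let A and B be closed subsets of a Banach space X and let x̄ ∈ A ∩ B. Then the set-valued map H_{A,B} is metrically subregular at the graph point ((x̄, x̄), 0) if and only if there exist K > 0 and δ > 0 such that d(x, A ∩ B) ≤ K(d(x, A) + d(x, B)) for all x ∈ B_δ(x̄). -/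
/-!
Call the right-hand condition subtransversality of `A`, `B` at `x̄`. The zero fibre of `H_{A,B}` is
the diagonal copy of `A ∩ B`, so the left-hand distance is
`d((x, y), H⁻¹(0)) = inf_{c ∈ A ∩ B} (‖x - c‖ + ‖y - c‖)`, and `d(0, H(a, b)) = ‖a - b‖` on `A × B`
(`+∞` elsewhere).

Subtransversality gives, for `(a, b) ∈ A × B` near `(x̄, x̄)`,
`d((a, b), H⁻¹(0)) ≤ 2 d(a, A ∩ B) + ‖a - b‖ ≤ 2K d(a, B) + ‖a - b‖ ≤ (2K + 1) ‖a - b‖`.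
Conversely, subregularity gives, for `x` near `x̄` and `a ∈ A`, `b ∈ B` near `x`,
`d(x, A ∩ B) ≤ ‖x - a‖ + d((a, b), H⁻¹(0)) ≤ ‖x - a‖ + K ‖a - b‖ ≤ (K + 1)(‖x - a‖ + ‖x - b‖)`,
and restricting to `a`, `b` near `x` loses nothing in `d(x, A)`, `d(x, B)` since `x̄ ∈ A ∩ B`
is near `x`.
-/

open Metric Set
open scoped ENNReal

section InfEDist

variable {α : Type*}

lemma infEDist_le_edist_add_iInf_edist_add_edist [PseudoEMetricSpace α] (x a b : α)
    (s : Set α) : infEDist x s ≤ edist x a + ⨅ c ∈ s, (edist a c + edist b c) := by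
  calc infEDist x s ≤ edist x a + infEDist a s := infEDist_le_edist_add_infEDist
    _ ≤ edist x a + ⨅ c ∈ s, (edist a c + edist b c) := by
      gcongr
      exact le_iInf₂ fun c hc => (infEDist_le_edist_of_mem hc).trans le_self_add

lemma iInf_edist_add_edist_le [PseudoEMetricSpace α] (x y : α) (s : Set α) :
    ⨅ c ∈ s, (edist x c + edist y c) ≤ 2 * infEDist x s + edist x y := by
  simp only [infEDist, ENNReal.mul_iInf_of_ne two_ne_zero ENNReal.ofNat_ne_top,
    ENNReal.iInf₂_add]
  refine iInf₂_mono fun c _ => ?_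
  calc edist x c + edist y c ≤ edist x c + (edist x y + edist x c) := by
        gcongr
        rw [edist_comm x y]
        exact edist_triangle y x c
    _ = 2 * edist x c + edist x y := by ring

lemma infEDist_inter_ball_eq [PseudoMetricSpace α] {x : α} {s : Set α} {r : ℝ}
    (h : infEDist x s < ENNReal.ofReal r) : infEDist x (s ∩ ball x r) = infEDist x s := by
  refine le_antisymm ?_ (infEDist_anti inter_subset_left)
  obtain ⟨z, hzs, hz⟩ := infEDist_lt_iff.1 h
  refine le_infEDist.2 fun y hys => ?_
  by_cases hy : dist y x < r
  · exact infEDist_le_edist_of_mem ⟨hys, hy⟩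
  · have hzball : z ∈ s ∩ ball x r :=
      ⟨hzs, by rw [mem_ball, dist_comm]; exact edist_lt_ofReal.1 hz⟩
    calc infEDist x (s ∩ ball x r) ≤ edist x z := infEDist_le_edist_of_mem hzball
      _ ≤ edist x y := by
        rw [edist_dist, edist_dist, dist_comm x y]
        exact ENNReal.ofReal_le_ofReal (by linarith [edist_lt_ofReal.1 hz])

lemma le_mul_infEDist_add_infEDist [PseudoEMetricSpace α] {x : α} {s t : Set α}
    {M d : ℝ≥0∞} (hM₀ : M ≠ 0) (hM : M ≠ ∞)
    (h : ∀ a ∈ s, ∀ b ∈ t, d ≤ M * (edist x a + edist x b)) :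
    d ≤ M * (infEDist x s + infEDist x t) := by
  rw [mul_comm, ← ENNReal.div_le_iff hM₀ hM]
  refine ENNReal.le_iInf₂_add_iInf₂ fun a ha b hb => ?_
  rw [ENNReal.div_le_iff hM₀ hM, mul_comm]
  exact h a ha b hb

end InfEDist

section Hmap

variable {X : Type*} [NormedAddCommGroup X] {A B : Set X}

lemma zero_mem_Hmap_iff {p : X × X} :
    (0 : X) ∈ Hmap A B p ↔ p.1 ∈ A ∧ p.2 ∈ B ∧ p.1 = p.2 := by
  simp only [Hmap, mem_ofPred_eq, eq_comm (a := (0 : X)), sub_eq_zero]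

lemma infEDist_zero_Hmap_of_mem {p : X × X} (h₁ : p.1 ∈ A) (h₂ : p.2 ∈ B) :
    infEDist 0 (Hmap A B p) = edist p.1 p.2 := by
  have hH : Hmap A B p = {p.1 - p.2} := by
    ext v
    simp [Hmap, h₁, h₂]
  rw [hH, infEDist_singleton, edist_dist, edist_dist, dist_zero_left, dist_eq_norm]

lemma infEDist_zero_Hmap_of_not_mem {p : X × X} (h : ¬(p.1 ∈ A ∧ p.2 ∈ B)) :
    infEDist 0 (Hmap A B p) = ∞ := by
  have hH : Hmap A B p = ∅ := by
    ext v
    simp only [Hmap, mem_ofPred_eq, mem_empty_iff_false, iff_false]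
    tauto
  rw [hH, infEDist_empty]

lemma sumInfEdist_Hmap_fiber_eq_iInf (p : X × X) :
    sumInfEdist p {q | (0 : X) ∈ Hmap A B q} =
      ⨅ c ∈ A ∩ B, (edist p.1 c + edist p.2 c) := by
  have hS : {q | (0 : X) ∈ Hmap A B q} = (fun c => (c, c)) '' (A ∩ B) := by
    ext ⟨q₁, q₂⟩
    simp only [mem_ofPred_eq, zero_mem_Hmap_iff, mem_image, mem_inter_iff, Prod.mk.injEq]
    constructor
    · rintro ⟨h₁, h₂, rfl⟩
      exact ⟨q₁, ⟨h₁, h₂⟩, rfl, rfl⟩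
    · rintro ⟨c, ⟨hA, hB⟩, rfl, rfl⟩
      exact ⟨hA, hB, rfl⟩
  rw [sumInfEdist, hS, iInf_image]
  refine iInf_congr fun c => iInf_congr fun _ => ?_
  rw [ENNReal.ofReal_add (norm_nonneg _) (norm_nonneg _), edist_dist, edist_dist,
    dist_eq_norm, dist_eq_norm]

lemma sumInfEdist_le_of_subtransversal {xbar : X} {K δ : ℝ} (hK : 0 ≤ K)
    (h : ∀ x ∈ ball xbar δ,
      infEDist x (A ∩ B) ≤ ENNReal.ofReal K * (infEDist x A + infEDist x B))
    {p : X × X} (hp : ‖p.1 - xbar‖ + ‖p.2 - xbar‖ < δ) :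
    sumInfEdist p {q | (0 : X) ∈ Hmap A B q} ≤
      ENNReal.ofReal (2 * K + 1) * infEDist 0 (Hmap A B p) := by
  by_cases hp' : p.1 ∈ A ∧ p.2 ∈ B
  swap
  · rw [infEDist_zero_Hmap_of_not_mem hp', ENNReal.mul_top (ENNReal.ofReal_pos.2 (by linarith)).ne']
    exact le_top
  obtain ⟨h₁, h₂⟩ := hp'
  have hball : p.1 ∈ ball xbar δ := by
    rw [mem_ball, dist_eq_norm]
    linarith [norm_nonneg (p.2 - xbar)]
  have hinter : infEDist p.1 (A ∩ B) ≤ ENNReal.ofReal K * edist p.1 p.2 := by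
    calc infEDist p.1 (A ∩ B) ≤ ENNReal.ofReal K * (infEDist p.1 A + infEDist p.1 B) :=
          h p.1 hball
      _ ≤ ENNReal.ofReal K * edist p.1 p.2 := by
          rw [infEDist_zero_of_mem h₁, zero_add]
          gcongr
          exact infEDist_le_edist_of_mem h₂
  calc sumInfEdist p {q | (0 : X) ∈ Hmap A B q}
      ≤ 2 * infEDist p.1 (A ∩ B) + edist p.1 p.2 := by
        rw [sumInfEdist_Hmap_fiber_eq_iInf]
        exact iInf_edist_add_edist_le p.1 p.2 (A ∩ B)
    _ ≤ 2 * (ENNReal.ofReal K * edist p.1 p.2) + edist p.1 p.2 := by gcongr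
    _ = ENNReal.ofReal (2 * K + 1) * infEDist 0 (Hmap A B p) := by
        rw [infEDist_zero_Hmap_of_mem h₁ h₂, ENNReal.ofReal_add (by positivity) zero_le_one,
          ENNReal.ofReal_mul zero_le_two, ENNReal.ofReal_ofNat, ENNReal.ofReal_one]
        ring

lemma infEDist_inter_le_of_subregular {xbar : X} {K δ : ℝ} (hK : 0 ≤ K)
    (h : ∀ p : X × X, ‖p.1 - xbar‖ + ‖p.2 - xbar‖ < δ →
      sumInfEdist p {q | (0 : X) ∈ Hmap A B q} ≤
        ENNReal.ofReal K * infEDist 0 (Hmap A B p))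
    {x a b : X} (ha : a ∈ A) (hb : b ∈ B) (hab : ‖a - xbar‖ + ‖b - xbar‖ < δ) :
    infEDist x (A ∩ B) ≤ ENNReal.ofReal (K + 1) * (edist x a + edist x b) := by
  have hsub := h (a, b) hab
  rw [infEDist_zero_Hmap_of_mem ha hb, sumInfEdist_Hmap_fiber_eq_iInf] at hsub
  have hedist : edist a b ≤ edist x a + edist x b := by
    rw [edist_comm x a]
    exact edist_triangle a x b
  calc infEDist x (A ∩ B) ≤ edist x a + ⨅ c ∈ A ∩ B, (edist a c + edist b c) :=
        infEDist_le_edist_add_iInf_edist_add_edist x a b (A ∩ B)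
    _ ≤ edist x a + ENNReal.ofReal K * edist a b := by gcongr
    _ ≤ edist x a + ENNReal.ofReal K * (edist x a + edist x b) := by gcongr
    _ ≤ ENNReal.ofReal (K + 1) * (edist x a + edist x b) := by
        rw [ENNReal.ofReal_add hK zero_le_one, ENNReal.ofReal_one, add_mul, one_mul, add_comm]
        gcongr
        exact le_self_add

lemma infEDist_inter_le_of_subregular_of_mem_ball {xbar : X} {K δ : ℝ} (hK : 0 ≤ K)
    (h : ∀ p : X × X, ‖p.1 - xbar‖ + ‖p.2 - xbar‖ < δ →
      sumInfEdist p {q | (0 : X) ∈ Hmap A B q} ≤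
        ENNReal.ofReal K * infEDist 0 (Hmap A B p))
    (hxbar : xbar ∈ A ∩ B) {x : X} (hx : x ∈ ball xbar (δ / 4)) :
    infEDist x (A ∩ B) ≤ ENNReal.ofReal (K + 1) * (infEDist x A + infEDist x B) := by
  rw [mem_ball, dist_eq_norm] at hx
  have hnear {s : Set X} (hs : xbar ∈ s) : infEDist x s < ENNReal.ofReal (δ / 4) :=
    (infEDist_le_edist_of_mem hs).trans_lt (edist_lt_ofReal.2 (by rwa [dist_eq_norm]))
  have hclose {y : X} (hy : y ∈ ball x (δ / 4)) : ‖y - xbar‖ < δ / 2 := by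
    rw [mem_ball, dist_eq_norm] at hy
    calc ‖y - xbar‖ = ‖(y - x) + (x - xbar)‖ := by rw [sub_add_sub_cancel]
      _ ≤ ‖y - x‖ + ‖x - xbar‖ := norm_add_le _ _
      _ < δ / 2 := by linarith
  rw [← infEDist_inter_ball_eq (hnear hxbar.1), ← infEDist_inter_ball_eq (hnear hxbar.2)]
  refine le_mul_infEDist_add_infEDist (ENNReal.ofReal_pos.2 (by linarith)).ne' ENNReal.ofReal_ne_top
    fun a ha b hb => ?_
  have hab : ‖a - xbar‖ + ‖b - xbar‖ < δ := by linarith [hclose ha.2, hclose hb.2]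
  exact infEDist_inter_le_of_subregular hK h ha.1 hb.1 hab

end Hmap

theorem stmt17_general {X : Type*} [NormedAddCommGroup X]
    {A B : Set X} {xbar : X} (hx : xbar ∈ A ∩ B) :
    -- metric subregularity of `H_{A,B}` at `((x̄, x̄), 0)`, with the sum metric on `X × X`
    (∃ K > 0, ∃ δ > 0, ∀ p : X × X, ‖p.1 - xbar‖ + ‖p.2 - xbar‖ < δ →
        sumInfEdist p {q | (0 : X) ∈ Hmap A B q} ≤
          ENNReal.ofReal K * EMetric.infEdist (0 : X) (Hmap A B p)) ↔
    (∃ K > 0, ∃ δ > 0, ∀ x ∈ Metric.ball xbar δ,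
        EMetric.infEdist x (A ∩ B) ≤
          ENNReal.ofReal K * (EMetric.infEdist x A + EMetric.infEdist x B)) := by
  constructor
  · rintro ⟨K, hK, δ, hδ, h⟩
    exact ⟨K + 1, by linarith, δ / 4, by positivity,
      fun x hx' => infEDist_inter_le_of_subregular_of_mem_ball hK.le h hx hx'⟩
  · rintro ⟨K, hK, δ, hδ, h⟩
    exact ⟨2 * K + 1, by positivity, δ, hδ,
      fun p hp => sumInfEdist_le_of_subtransversal hK.le h hp⟩

theorem stmt17 {X : Type*} [NormedAddCommGroup X] [NormedSpace ℝ X] [CompleteSpace X]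
    {A B : Set X} (hA : IsClosed A) (hB : IsClosed B) {xbar : X} (hx : xbar ∈ A ∩ B) :
    -- metric subregularity of `H_{A,B}` at `((x̄, x̄), 0)`, with the sum metric on `X × X`
    (∃ K > 0, ∃ δ > 0, ∀ p : X × X, ‖p.1 - xbar‖ + ‖p.2 - xbar‖ < δ →
        sumInfEdist p {q | (0 : X) ∈ Hmap A B q} ≤
          ENNReal.ofReal K * EMetric.infEdist (0 : X) (Hmap A B p)) ↔
    (∃ K > 0, ∃ δ > 0, ∀ x ∈ Metric.ball xbar δ,
        EMetric.infEdist x (A ∩ B) ≤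
          ENNReal.ofReal K * (EMetric.infEdist x A + EMetric.infEdist x B)) :=
  stmt17_general hx
end

section
/- Let A and B be closed subsets of a Banach space X and let x̄ ∈ A ∩ B. Then A and B are transversal at x̄ if and only if there exist K > 0 and δ > 0 such that d(x, A ∩ (B − b)) ≤ K(d(x, A) + d(x, B − b)) for all x ∈ B_δ(x̄) and all b ∈ B_δ(0) (i.e., in the defining inequality of transversality only one of the sets needs to be translated). -/
open Metric Set
open scoped ENNReal

/-- Transversality of closed sets `A`, `B` at a point `x0 ∈ A ∩ B`: the subtransversality
inequality holds uniformly for all small translations of both sets. -/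
def Transversal {X : Type*} [NormedAddCommGroup X] (A B : Set X) (x0 : X) : Prop :=
  ∃ K > 0, ∃ δ > 0, ∀ a ∈ Metric.ball (0 : X) δ, ∀ b ∈ Metric.ball (0 : X) δ,
    ∀ x ∈ Metric.ball x0 δ,
      EMetric.infEdist x (((· - a) '' A) ∩ ((· - b) '' B)) ≤
        ENNReal.ofReal K *
          (EMetric.infEdist x ((· - a) '' A) + EMetric.infEdist x ((· - b) '' B))

/-!
Translating both sets and the point by the same vector changes no distance, so the inequality
for the translations `(a, b)` at `x` is the one-sided inequality for `(0, b - a)` at `x + a`.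
Taking `δ/2` as the new radius keeps `b - a` and `x + a` inside the original balls.
-/

theorem Metric.infEDist_image_sub_const_s18 {X : Type*} [SeminormedAddCommGroup X] (x a : X)
    (S : Set X) : infEDist x ((· - a) '' S) = infEDist (x + a) S := by
  simpa using infEDist_image (IsometryEquiv.subRight a).isometry (x := x + a) (t := S)

theorem Set.image_sub_const_eq_image_sub_const_image {X : Type*} [AddCommGroup X] (a b : X)
    (S : Set X) : (· - b) '' S = (· - a) '' ((· - (b - a)) '' S) := by
  rw [image_image]
  exact image_congr' fun w => by abel

theorem stmt18_general {X : Type*} [NormedAddCommGroup X]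
    {A B : Set X} {xbar : X} :
    Transversal A B xbar ↔
      ∃ K > 0, ∃ δ > 0, ∀ b ∈ Metric.ball (0 : X) δ, ∀ x ∈ Metric.ball xbar δ,
        EMetric.infEdist x (A ∩ ((· - b) '' B)) ≤
          ENNReal.ofReal K * (EMetric.infEdist x A + EMetric.infEdist x ((· - b) '' B)) := by
  constructor
  · rintro ⟨K, hK, δ, hδ, h⟩
    exact ⟨K, hK, δ, hδ, fun b hb x hx => by simpa using h 0 (mem_ball_self hδ) b hb x hx⟩
  · rintro ⟨K, hK, δ, hδ, h⟩
    refine ⟨K, hK, δ / 2, half_pos hδ, fun a ha b hb x hx => ?_⟩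
    rw [mem_ball_zero_iff] at ha hb
    have hba : b - a ∈ ball (0 : X) δ := by
      rw [mem_ball_zero_iff]
      linarith [norm_sub_le b a]
    have hxa : x + a ∈ ball xbar δ := by
      rw [mem_ball] at hx ⊢
      linarith [dist_triangle (x + a) x xbar, dist_self_add_left a x]
    rw [image_sub_const_eq_image_sub_const_image a b B, ← image_inter sub_left_injective]
    simp only [EMetric.infEdist, Metric.infEDist_image_sub_const_s18 x a]
    exact h (b - a) hba (x + a) hxa

theorem stmt18 {X : Type*} [NormedAddCommGroup X] [NormedSpace ℝ X] [CompleteSpace X]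
    {A B : Set X} (hA : IsClosed A) (hB : IsClosed B) {xbar : X} (hx : xbar ∈ A ∩ B) :
    Transversal A B xbar ↔
      ∃ K > 0, ∃ δ > 0, ∀ b ∈ Metric.ball (0 : X) δ, ∀ x ∈ Metric.ball xbar δ,
        EMetric.infEdist x (A ∩ ((· - b) '' B)) ≤
          ENNReal.ofReal K * (EMetric.infEdist x A + EMetric.infEdist x ((· - b) '' B)) :=
  stmt18_general
end
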